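/- For a minuscule weight λ, the first cohomology coefficient n_α := (Σ_{γ ∈ Δ⁺ \ Δ_P⁺} γ, α^∨) equals the Coxeter number s of 𝔤, for every α ∈ Δ⁺ \ Δ_P⁺. -/

import Mathlib

open scoped InnerProductSpace
noncomputable section

variable {E : Type*} [NormedAddCommGroup E] [InnerProductSpace ℝ E]

/-- The pairing `(x, a^∨) = 2(x,a)/(a,a)` of `x` with the coroot of `a`. -/
def coPair (x a : E) : ℝ := 2 * ⟪x, a⟫_ℝ / ⟪a, a⟫_ℝ

/-- A (crystallographic, reduced) root system `Δ` in a Euclidean space `E`. -/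
structure IsRootSystem (Δ : Set E) : Prop where
  finite : Δ.Finite
  not_zero : (0 : E) ∉ Δ
  span_top : Submodule.span ℝ Δ = ⊤
  reflect_mem : ∀ a ∈ Δ, ∀ b ∈ Δ, b - coPair b a • a ∈ Δ
  integral : ∀ a ∈ Δ, ∀ b ∈ Δ, ∃ z : ℤ, coPair b a = z
  reduced : ∀ a ∈ Δ, ∀ t : ℝ, t • a ∈ Δ → t = 1 ∨ t = -1

/-- `sr` is a system of simple roots (a base) for `Δ`: every root is a sum of simple
roots with nonnegative integer coefficients, or the negative of such a sum. -/
structure IsBase (Δ : Set E) {l : ℕ} (sr : Fin l → E) : Prop where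
  mem : ∀ i, sr i ∈ Δ
  indep : LinearIndependent ℝ sr
  decomp : ∀ a ∈ Δ,
    (∃ c : Fin l → ℕ, a = ∑ i, (c i : ℝ) • sr i) ∨
    (∃ c : Fin l → ℕ, a = -∑ i, (c i : ℝ) • sr i)

/-- `a` is a positive root with respect to the base `sr`. -/
def IsPositiveRoot (Δ : Set E) {l : ℕ} (sr : Fin l → E) (a : E) : Prop :=
  a ∈ Δ ∧ ∃ c : Fin l → ℕ, a = ∑ i, (c i : ℝ) • sr i

/-- `lam` belongs to the weight lattice: `(lam, a^∨) ∈ ℤ` for every root `a`. -/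
def IsIntegralWeight (Δ : Set E) (lam : E) : Prop := ∀ a ∈ Δ, ∃ z : ℤ, coPair lam a = z

/-- `lam` is a dominant weight. -/
def IsDominant (Δ : Set E) {l : ℕ} (sr : Fin l → E) (lam : E) : Prop :=
  IsIntegralWeight Δ lam ∧ ∀ i, 0 ≤ coPair lam (sr i)

/-- `lam` is a minuscule weight: dominant and `(lam, a^∨) ≤ 1` for all positive roots `a`. -/
def IsMinuscule (Δ : Set E) {l : ℕ} (sr : Fin l → E) (lam : E) : Prop :=
  IsDominant Δ sr lam ∧ ∀ a, IsPositiveRoot Δ sr a → coPair lam a ≤ 1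

/-- `g` is the (orthogonal) reflection in the root `a`. -/
def IsReflectionIn (a : E) (g : E ≃ₗ[ℝ] E) : Prop := ∀ x, g x = x - coPair x a • a

/-- `g` is a simple reflection. -/
def IsSimpleReflection (Δ : Set E) {l : ℕ} (sr : Fin l → E) (g : E ≃ₗ[ℝ] E) : Prop :=
  ∃ i, IsReflectionIn (sr i) g

/-- The Weyl group `W`: generated by the reflections in the roots. -/
def weylGroup (Δ : Set E) : Subgroup (E ≃ₗ[ℝ] E) :=
  Subgroup.closure {g | ∃ a ∈ Δ, IsReflectionIn a g}

/-- The length of `w`: minimal length of an expression of `w` as a product of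
simple reflections. -/
def weylLength (Δ : Set E) {l : ℕ} (sr : Fin l → E) (w : E ≃ₗ[ℝ] E) : ℕ :=
  sInf {n | ∃ L : List (E ≃ₗ[ℝ] E), L.length = n ∧
    (∀ g ∈ L, IsSimpleReflection Δ sr g) ∧ L.prod = w}

/-- The parabolic subgroup `W_P` associated to the weight `lam`: generated by the
simple reflections `s_β` with `(lam, β^∨) = 0`. -/
def parabolic (Δ : Set E) {l : ℕ} (sr : Fin l → E) (lam : E) : Subgroup (E ≃ₗ[ℝ] E) :=
  Subgroup.closure {g | ∃ i, coPair lam (sr i) = 0 ∧ IsReflectionIn (sr i) g}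

/-- `u ∈ W^P`: `u` is a minimal length representative of its coset `u W_P`,
i.e. `ℓ(u s_β) > ℓ(u)` for every simple reflection `s_β ∈ W_P`. -/
def IsMinRep (Δ : Set E) {l : ℕ} (sr : Fin l → E) (lam : E) (u : E ≃ₗ[ℝ] E) : Prop :=
  u ∈ weylGroup Δ ∧ ∀ g : E ≃ₗ[ℝ] E,
    (∃ i, coPair lam (sr i) = 0 ∧ IsReflectionIn (sr i) g) →
    weylLength Δ sr u < weylLength Δ sr (u * g)

/-- The length function on `W^P`: the length of the minimal length representative
of the coset `w W_P`. -/
def cosetLength (Δ : Set E) {l : ℕ} (sr : Fin l → E) (lam : E) (w : E ≃ₗ[ℝ] E) : ℕ :=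
  sInf {n | ∃ v ∈ parabolic Δ sr lam, n = weylLength Δ sr (w * v)}

/-- `ψ` is the highest root. -/
def IsHighestRoot (Δ : Set E) {l : ℕ} (sr : Fin l → E) (ψ : E) : Prop :=
  IsPositiveRoot Δ sr ψ ∧ ∀ a, IsPositiveRoot Δ sr a →
    ∃ c : Fin l → ℕ, ψ - a = ∑ i, (c i : ℝ) • sr i


namespace MinAux

variable {Δ : Set E} {l : ℕ} {sr : Fin l → E}

lemma inner_self_pos_of_mem (hΔ : IsRootSystem Δ) {a : E} (ha : a ∈ Δ) :
    0 < ⟪a, a⟫_ℝ := by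
  rcases lt_or_eq_of_le (real_inner_self_nonneg (x := a)) with h | h
  · exact h
  · exact absurd ((inner_self_eq_zero (𝕜 := ℝ)).mp h.symm ▸ ha) hΔ.not_zero

lemma inner_self_ne (hΔ : IsRootSystem Δ) {a : E} (ha : a ∈ Δ) : ⟪a, a⟫_ℝ ≠ 0 :=
  ne_of_gt (inner_self_pos_of_mem hΔ ha)

lemma coPair_self (hΔ : IsRootSystem Δ) {a : E} (ha : a ∈ Δ) : coPair a a = 2 := by
  have := inner_self_ne hΔ ha
  unfold coPair; field_simp

lemma neg_mem (hΔ : IsRootSystem Δ) {a : E} (ha : a ∈ Δ) : -a ∈ Δ := by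
  have h := hΔ.reflect_mem a ha a ha
  rw [coPair_self hΔ ha] at h
  have : a - (2:ℝ) • a = -a := by
    rw [two_smul]; abel
  rwa [this] at h

lemma coPair_smul_left (r : ℝ) (x a : E) : coPair (r • x) a = r * coPair x a := by
  unfold coPair; rw [real_inner_smul_left]; ring

lemma coPair_sum_left {ι : Type*} (s : Finset ι) (f : ι → E) (a : E) :
    coPair (∑ i ∈ s, f i) a = ∑ i ∈ s, coPair (f i) a := by
  unfold coPair
  rw [sum_inner, Finset.mul_sum, Finset.sum_div]

/-- coordinates are unique -/
lemma coords_eq (hsr : IsBase Δ sr) {c d : Fin l → ℝ}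
    (h : ∑ i, c i • sr i = ∑ i, d i • sr i) : ∀ i, c i = d i := by
  intro i
  have h0 : ∑ i, (c i - d i) • sr i = 0 := by
    simp only [sub_smul, Finset.sum_sub_distrib, h, sub_self]
  have := (Fintype.linearIndependent_iff.mp hsr.indep) (fun i => c i - d i) h0 i
  linarith

/-- a root which is a nonneg real combination of the simple roots is positive -/
lemma isPos_of_nonneg (hΔ : IsRootSystem Δ) (hsr : IsBase Δ sr) {x : E} (hx : x ∈ Δ)
    {c : Fin l → ℝ} (hc : ∀ i, 0 ≤ c i) (hrep : x = ∑ i, c i • sr i) :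
    IsPositiveRoot Δ sr x := by
  rcases hsr.decomp x hx with ⟨n, hn⟩ | ⟨n, hn⟩
  · exact ⟨hx, n, hn⟩
  · exfalso
    have h0 : ∑ i, c i • sr i = ∑ i, (-(n i : ℝ)) • sr i := by
      rw [← hrep, hn, ← Finset.sum_neg_distrib]
      simp [neg_smul]
    have : ∀ i, c i = -(n i : ℝ) := coords_eq hsr h0
    have hz : ∀ i, c i = 0 := by
      intro i
      have := this i
      have hn0 : (0:ℝ) ≤ (n i : ℝ) := Nat.cast_nonneg _
      linarith [hc i]
    have : x = 0 := by
      rw [hrep]; exact Finset.sum_eq_zero fun i _ => by rw [hz i, zero_smul]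
    exact hΔ.not_zero (this ▸ hx)

/-- positive root coordinates are nonnegative in any real representation -/
lemma pos_coords_nonneg (hsr : IsBase Δ sr) {x : E} (hx : IsPositiveRoot Δ sr x)
    {d : Fin l → ℝ} (hrep : x = ∑ i, d i • sr i) : ∀ i, 0 ≤ d i := by
  obtain ⟨_, c, hc⟩ := hx
  intro i
  have := coords_eq hsr (show (∑ i, (c i : ℝ) • sr i) = ∑ i, d i • sr i by rw [← hc, ← hrep]) i
  rw [← this]; exact Nat.cast_nonneg _

end MinAux

namespace MinAux

variable {Δ : Set E} {l : ℕ} {sr : Fin l → E}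

/-- the reflection in `a` -/
def sRef (a x : E) : E := x - coPair x a • a

lemma sRef_mem (hΔ : IsRootSystem Δ) {a x : E} (ha : a ∈ Δ) (hx : x ∈ Δ) :
    sRef a x ∈ Δ := hΔ.reflect_mem a ha x hx

lemma inner_sRef_sRef {a : E} (ha2 : ⟪a, a⟫_ℝ ≠ 0) (x y : E) :
    ⟪sRef a x, sRef a y⟫_ℝ = ⟪x, y⟫_ℝ := by
  unfold sRef coPair
  simp only [inner_sub_left, inner_sub_right, real_inner_smul_left, real_inner_smul_right]
  rw [real_inner_comm a y]
  field_simp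
  ring

lemma inner_sRef_swap {a : E} (ha2 : ⟪a, a⟫_ℝ ≠ 0) (x y : E) :
    ⟪sRef a x, y⟫_ℝ = ⟪x, sRef a y⟫_ℝ := by
  unfold sRef coPair
  simp only [inner_sub_left, inner_sub_right, real_inner_smul_left, real_inner_smul_right]
  rw [real_inner_comm a y]
  ring

lemma coPair_self' {a : E} (ha2 : ⟪a, a⟫_ℝ ≠ 0) : coPair a a = 2 := by
  unfold coPair; field_simp

lemma sRef_self {a : E} (ha2 : ⟪a, a⟫_ℝ ≠ 0) : sRef a a = -a := by
  unfold sRef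
  rw [coPair_self' ha2, two_smul]
  abel

lemma coPair_sRef_left {a : E} (ha2 : ⟪a, a⟫_ℝ ≠ 0) (x : E) :
    coPair (sRef a x) a = - coPair x a := by
  unfold sRef coPair
  rw [inner_sub_left, real_inner_smul_left]
  field_simp
  ring

lemma sRef_invol {a : E} (ha2 : ⟪a, a⟫_ℝ ≠ 0) (x : E) : sRef a (sRef a x) = x := by
  show sRef a x - coPair (sRef a x) a • a = x
  rw [coPair_sRef_left ha2, neg_smul]
  unfold sRef
  abel

/-- string lemma : if the inner product is negative then the sum is a root -/
lemma add_mem_of_inner_neg (hΔ : IsRootSystem Δ) {x y : E} (hx : x ∈ Δ) (hy : y ∈ Δ)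
    (hneg : ⟪x, y⟫_ℝ < 0) (hne : x ≠ -y) : x + y ∈ Δ := by
  have hxx := inner_self_pos_of_mem hΔ hx
  have hyy := inner_self_pos_of_mem hΔ hy
  obtain ⟨zp, hzp⟩ := hΔ.integral y hy x hx   -- coPair x y = zp
  obtain ⟨zm, hzm⟩ := hΔ.integral x hx y hy   -- coPair y x = zm
  have hu1 : 2 * ⟪x, y⟫_ℝ = zp * ⟪y, y⟫_ℝ := by
    have h := hzp
    unfold coPair at h
    exact (div_eq_iff (ne_of_gt hyy)).mp h
  have hcomm : ⟪y, x⟫_ℝ = ⟪x, y⟫_ℝ := real_inner_comm x y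
  have hu2 : 2 * ⟪x, y⟫_ℝ = zm * ⟪x, x⟫_ℝ := by
    have h := hzm
    unfold coPair at h
    have h' := (div_eq_iff (ne_of_gt hxx)).mp h
    linarith [h']
  have hzp_neg : (zp : ℝ) < 0 := by
    have : (zp:ℝ) * ⟪y, y⟫_ℝ < 0 := by linarith
    exact neg_of_mul_neg_left this (le_of_lt hyy)
  have hzm_neg : (zm : ℝ) < 0 := by
    have : (zm:ℝ) * ⟪x, x⟫_ℝ < 0 := by linarith
    exact neg_of_mul_neg_left this (le_of_lt hxx)
  have hzp_le : zp ≤ -1 := by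
    have : zp < 0 := by exact_mod_cast hzp_neg
    omega
  have hzm_le : zm ≤ -1 := by
    have : zm < 0 := by exact_mod_cast hzm_neg
    omega
  by_cases h1 : zp = -1
  · have hcp : coPair x y = -1 := by rw [hzp, h1]; norm_num
    have := hΔ.reflect_mem y hy x hx
    rw [hcp] at this
    have h2 : x - (-1 : ℝ) • y = x + y := by rw [neg_smul, one_smul, sub_neg_eq_add]
    rwa [h2] at this
  by_cases h2 : zm = -1
  · have hcp : coPair y x = -1 := by rw [hzm, h2]; norm_num
    have := hΔ.reflect_mem x hx y hy
    rw [hcp] at this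
    have h3 : y - (-1 : ℝ) • x = x + y := by rw [neg_smul, one_smul, sub_neg_eq_add]; abel
    rwa [h3] at this
  exfalso
  have hzp2 : (zp : ℝ) ≤ -2 := by exact_mod_cast (by omega : zp ≤ -2)
  have hzm2 : (zm : ℝ) ≤ -2 := by exact_mod_cast (by omega : zm ≤ -2)
  have hCS := real_inner_mul_inner_self_le x y
  have hz4 : (4:ℝ) ≤ (zp:ℝ) * (zm:ℝ) := by nlinarith [hzp2, hzm2]
  have hmul : 4 * (⟪x, y⟫_ℝ * ⟪x, y⟫_ℝ) = ((zp:ℝ) * (zm:ℝ)) * (⟪x, x⟫_ℝ * ⟪y, y⟫_ℝ) := by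
    calc 4 * (⟪x, y⟫_ℝ * ⟪x, y⟫_ℝ) = (2 * ⟪x, y⟫_ℝ) * (2 * ⟪x, y⟫_ℝ) := by ring
    _ = ((zp:ℝ) * ⟪y, y⟫_ℝ) * ((zm:ℝ) * ⟪x, x⟫_ℝ) := by rw [← hu1, ← hu2]
    _ = ((zp:ℝ) * (zm:ℝ)) * (⟪x, x⟫_ℝ * ⟪y, y⟫_ℝ) := by ring
  have hge : ⟪x, x⟫_ℝ * ⟪y, y⟫_ℝ ≤ ⟪x, y⟫_ℝ * ⟪x, y⟫_ℝ := by
    nlinarith [mul_pos hxx hyy, mul_nonneg (by linarith : (0:ℝ) ≤ (zp:ℝ) * (zm:ℝ) - 4)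
      (le_of_lt (mul_pos hxx hyy))]
  have heq : ⟪x, y⟫_ℝ * ⟪x, y⟫_ℝ = ⟪x, x⟫_ℝ * ⟪y, y⟫_ℝ := le_antisymm hCS hge
  -- equality in Cauchy-Schwarz: x, y proportional
  have hxn : ⟪x, x⟫_ℝ = ‖x‖ * ‖x‖ := real_inner_self_eq_norm_mul_norm x
  have hyn : ⟪y, y⟫_ℝ = ‖y‖ * ‖y‖ := real_inner_self_eq_norm_mul_norm y
  have hinner_neg_y : ⟪x, -y⟫_ℝ = ‖x‖ * ‖-y‖ := by
    rw [inner_neg_right, norm_neg]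
    have hsq : (-⟪x, y⟫_ℝ) * (-⟪x, y⟫_ℝ) = (‖x‖ * ‖y‖) * (‖x‖ * ‖y‖) := by
      calc (-⟪x, y⟫_ℝ) * (-⟪x, y⟫_ℝ) = ⟪x, y⟫_ℝ * ⟪x, y⟫_ℝ := by ring
      _ = ⟪x, x⟫_ℝ * ⟪y, y⟫_ℝ := heq
      _ = (‖x‖ * ‖x‖) * (‖y‖ * ‖y‖) := by rw [hxn, hyn]
      _ = (‖x‖ * ‖y‖) * (‖x‖ * ‖y‖) := by ring
    rcases mul_self_eq_mul_self_iff.mp hsq with h | h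
    · exact h
    · exfalso
      have h1' : 0 < -⟪x, y⟫_ℝ := by linarith
      have h2' : 0 ≤ ‖x‖ * ‖y‖ := mul_nonneg (norm_nonneg x) (norm_nonneg y)
      linarith
  have hprop := inner_eq_norm_mul_iff_real.mp hinner_neg_y
  rw [norm_neg] at hprop
  -- hprop : ‖y‖ • x = ‖x‖ • (-y)
  have hy0 : ‖y‖ ≠ 0 := by
    intro h
    rw [norm_eq_zero] at h
    subst h
    simp at hyy
  have hxty : x = (-(‖x‖ / ‖y‖)) • y := by
    have heq2 : ‖y‖ • x = (-‖x‖) • y := by rw [hprop, smul_neg, neg_smul]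
    have h4 : (‖y‖)⁻¹ • (‖y‖ • x) = (‖y‖)⁻¹ • ((-‖x‖) • y) := by rw [heq2]
    rw [smul_smul, smul_smul, inv_mul_cancel₀ hy0, one_smul] at h4
    have h5 : ‖y‖⁻¹ * -‖x‖ = -(‖x‖ / ‖y‖) := by field_simp
    rw [← h5]
    exact h4
  have := hΔ.reduced y hy (-(‖x‖ / ‖y‖)) (by rw [← hxty]; exact hx)
  rcases this with h | h
  · have hx0 : 0 < ‖x‖ := by
      have : x ≠ 0 := fun h0 => hΔ.not_zero (h0 ▸ hx)
      exact norm_pos_iff.mpr this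
    have : 0 < ‖x‖ / ‖y‖ := div_pos hx0 (lt_of_le_of_ne (norm_nonneg y) (Ne.symm hy0))
    linarith [h]
  · rw [h, neg_one_smul] at hxty
    exact hne hxty

end MinAux

namespace MinAux

variable {Δ : Set E} {l : ℕ} {sr : Fin l → E}

local instance : DecidableEq E := Classical.decEq E

/-- the finset of positive roots -/
def posFin (hΔ : IsRootSystem Δ) (sr : Fin l → E) : Finset E :=
  (hΔ.finite.subset (fun _ h => h.1 : {a | IsPositiveRoot Δ sr a} ⊆ Δ)).toFinset

lemma mem_posFin {hΔ : IsRootSystem Δ} {x : E} :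
    x ∈ posFin hΔ sr ↔ IsPositiveRoot Δ sr x := Set.Finite.mem_toFinset _

/-- generic pairing lemma: if `g` is an involution of `s` and `f x + f (g x) = w x`
then `∑ f = 2⁻¹ • ∑ w`. -/
lemma sum_pairing {V : Type*} [AddCommGroup V] [Module ℝ V]
    (s : Finset E) (g : E → E) (hg_mem : ∀ x ∈ s, g x ∈ s)
    (hg_inv : ∀ x ∈ s, g (g x) = x) (f w : E → V)
    (hfw : ∀ x ∈ s, f x + f (g x) = w x) :
    ∑ x ∈ s, f x = (2⁻¹ : ℝ) • ∑ x ∈ s, w x := by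
  classical
  have hww : ∀ x ∈ s, w (g x) = w x := by
    intro x hx
    have h1 := hfw (g x) (hg_mem x hx)
    rw [hg_inv x hx] at h1
    rw [← h1, ← hfw x hx]
    abel
  have hzero : ∑ x ∈ s, (f x - (2⁻¹ : ℝ) • w x) = 0 := by
    apply Finset.sum_involution (fun x _ => g x)
    · intro x hx
      have h1 := hfw x hx
      have h2 := hww x hx
      have : f x + f (g x) - ((2⁻¹ : ℝ) • w x + (2⁻¹ : ℝ) • w (g x)) = 0 := by
        rw [h1, h2, ← add_smul]
        norm_num
      calc f x - (2⁻¹ : ℝ) • w x + (f (g x) - (2⁻¹ : ℝ) • w (g x))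
          = f x + f (g x) - ((2⁻¹ : ℝ) • w x + (2⁻¹ : ℝ) • w (g x)) := by abel
        _ = 0 := this
    · intro x hx hne
      intro hgx
      apply hne
      have h1 := hfw x hx
      rw [hgx] at h1
      have h2 : w x = f x + f x := h1.symm
      rw [h2, smul_add, ← add_smul]
      norm_num
    · intro x hx; exact hg_mem x hx
    · intro x hx; exact hg_inv x hx
  have := Finset.sum_sub_distrib (f := f) (g := fun x => (2⁻¹ : ℝ) • w x) (s := s)
  rw [this] at hzero
  rw [← Finset.smul_sum] at hzero
  have := sub_eq_zero.mp hzero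
  exact this

/-- the simple reflection `s_j` is an involution of `Δ⁺ \ {α_j}` -/
lemma sRef_simple_stable (hΔ : IsRootSystem Δ) (hsr : IsBase Δ sr) (j : Fin l) :
    ∀ x ∈ (posFin hΔ sr).erase (sr j), sRef (sr j) x ∈ (posFin hΔ sr).erase (sr j) := by
  intro x hx
  have hxmem := Finset.mem_of_mem_erase hx
  have hxne : x ≠ sr j := Finset.ne_of_mem_erase hx
  have hxpos : IsPositiveRoot Δ sr x := mem_posFin.mp hxmem
  have hjΔ : sr j ∈ Δ := hsr.mem j
  have hj2 : ⟪sr j, sr j⟫_ℝ ≠ 0 := inner_self_ne hΔ hjΔ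
  obtain ⟨hxΔ, c, hc⟩ := id hxpos
  have hrefΔ : sRef (sr j) x ∈ Δ := sRef_mem hΔ hjΔ hxΔ
  -- representation of the reflected root
  set k : ℝ := coPair x (sr j) with hk
  have hsum1 : (∑ i, ((c i : ℝ) - (if i = j then k else 0)) • sr i)
      = (∑ i, (c i : ℝ) • sr i) - k • sr j := by
    rw [show (∑ i, ((c i : ℝ) - (if i = j then k else 0)) • sr i)
        = (∑ i, (c i : ℝ) • sr i) - (∑ i, (if i = j then k else 0) • sr i) by
      rw [← Finset.sum_sub_distrib]
      congr 1; funext i; rw [sub_smul]]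
    congr 1
    rw [show (∑ i, (if i = j then k else 0) • sr i) = ∑ i, (if i = j then k • sr i else 0) by
      congr 1; funext i; split <;> simp]
    rw [Finset.sum_ite_eq' Finset.univ j (fun i => k • sr i)]
    simp
  have hrep : sRef (sr j) x = ∑ i, ((c i : ℝ) - (if i = j then k else 0)) • sr i := by
    rw [hsum1, ← hc]
    unfold sRef
    rw [hk]
  -- it is not the case that x is supported only on j
  have hsupp : ¬ (∀ i, i ≠ j → c i = 0) := by
    intro hs
    have hxj : x = (c j : ℝ) • sr j := by
      rw [hc]
      rw [Finset.sum_eq_single j]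
      · intro b _ hb
        rw [hs b hb]; simp
      · intro hb; exact absurd (Finset.mem_univ j) hb
    have := hΔ.reduced (sr j) hjΔ (c j) (by rw [← hxj]; exact hxΔ)
    rcases this with h | h
    · apply hxne
      rw [hxj, h, one_smul]
    · have : (0:ℝ) ≤ (c j : ℝ) := Nat.cast_nonneg _
      rw [h] at this; linarith
  push_neg at hsupp
  obtain ⟨i0, hi0ne, hi0⟩ := hsupp
  -- the reflected root is positive
  have hrefpos : IsPositiveRoot Δ sr (sRef (sr j) x) := by
    rcases hsr.decomp _ hrefΔ with ⟨n, hn⟩ | ⟨n, hn⟩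
    · exact ⟨hrefΔ, n, hn⟩
    · exfalso
      have h0 : ∑ i, ((c i : ℝ) - (if i = j then k else 0)) • sr i
          = ∑ i, (-(n i : ℝ)) • sr i := by
        rw [← hrep, hn, ← Finset.sum_neg_distrib]
        congr 1; funext i; rw [neg_smul]
      have hco := coords_eq hsr h0
      have := hco i0
      simp only [if_neg hi0ne] at this
      have hn0 : (0:ℝ) ≤ (n i0 : ℝ) := Nat.cast_nonneg _
      have hc0 : (0:ℝ) < (c i0 : ℝ) := by exact_mod_cast Nat.pos_of_ne_zero hi0
      linarith
  rw [Finset.mem_erase]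
  constructor
  · intro heq
    have := sRef_invol hj2 x
    rw [heq, sRef_self hj2] at this
    rw [← this] at hxpos
    have hnegrep : -sr j = ∑ i, (-(if i = j then (1:ℝ) else 0)) • sr i := by
      rw [show (∑ i, (-(if i = j then (1:ℝ) else 0)) • sr i)
          = -∑ i, (if i = j then (1:ℝ) else 0) • sr i by
        rw [← Finset.sum_neg_distrib]; congr 1; funext i; rw [neg_smul]]
      congr 1
      rw [show (∑ i, (if i = j then (1:ℝ) else 0) • sr i)
          = ∑ i, (if i = j then (1:ℝ) • sr i else 0) by
        congr 1; funext i; split <;> simp]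
      rw [Finset.sum_ite_eq' Finset.univ j (fun i => (1:ℝ) • sr i)]
      simp
    have := pos_coords_nonneg hsr hxpos hnegrep j
    simp at this
    linarith
  · exact mem_posFin.mpr hrefpos

end MinAux

namespace MinAux

variable {Δ : Set E} {l : ℕ} {sr : Fin l → E}

local instance : DecidableEq E := Classical.decEq E

lemma simple_isPos (hsr : IsBase Δ sr) (j : Fin l) : IsPositiveRoot Δ sr (sr j) := by
  refine ⟨hsr.mem j, fun i => if i = j then 1 else 0, ?_⟩
  simp [apply_ite (fun n : ℕ => (n:ℝ)), ite_smul, Finset.sum_ite_eq']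

lemma coPair_sRef_simple (hΔ : IsRootSystem Δ) (hsr : IsBase Δ sr) (j : Fin l)
    {x : E} (hx : x ∈ Δ) :
    coPair (sr j) (sRef (sr j) x) = - coPair (sr j) x := by
  have hj2 : ⟪sr j, sr j⟫_ℝ ≠ 0 := inner_self_ne hΔ (hsr.mem j)
  unfold coPair
  rw [inner_sRef_sRef hj2 x x]
  rw [show ⟪sr j, sRef (sr j) x⟫_ℝ = ⟪sRef (sr j) (sr j), x⟫_ℝ from
    (inner_sRef_swap hj2 (sr j) x).symm]
  rw [sRef_self hj2, inner_neg_left]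
  ring

/-- `∑_{γ ∈ Δ⁺} ⟨α_j, γ^∨⟩ = 2` -/
lemma sum_coPair_simple (hΔ : IsRootSystem Δ) (hsr : IsBase Δ sr) (j : Fin l) :
    ∑ γ ∈ posFin hΔ sr, coPair (sr j) γ = 2 := by
  have hjpos : sr j ∈ posFin hΔ sr := mem_posFin.mpr (simple_isPos hsr j)
  have hj2 : ⟪sr j, sr j⟫_ℝ ≠ 0 := inner_self_ne hΔ (hsr.mem j)
  rw [← Finset.add_sum_erase _ _ hjpos]
  have herase : ∑ γ ∈ (posFin hΔ sr).erase (sr j), coPair (sr j) γ = 0 := by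
    have := sum_pairing ((posFin hΔ sr).erase (sr j)) (sRef (sr j))
      (sRef_simple_stable hΔ hsr j)
      (fun x _ => sRef_invol hj2 x)
      (fun γ => coPair (sr j) γ) (fun _ => (0:ℝ))
      (fun γ hγ => by
        have hγΔ : γ ∈ Δ := (mem_posFin.mp (Finset.mem_of_mem_erase hγ)).1
        rw [coPair_sRef_simple hΔ hsr j hγΔ]; ring)
    rw [this]
    simp
  rw [herase, coPair_self' hj2, add_zero]

/-- `∑_{γ ∈ Δ⁺} ⟨α_j, γ^∨⟩ γ` is a multiple of `α_j` -/
lemma eigen_simple (hΔ : IsRootSystem Δ) (hsr : IsBase Δ sr) (j : Fin l) :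
    ∃ r : ℝ, ∑ γ ∈ posFin hΔ sr, coPair (sr j) γ • γ = r • sr j := by
  have hjpos : sr j ∈ posFin hΔ sr := mem_posFin.mpr (simple_isPos hsr j)
  have hj2 : ⟪sr j, sr j⟫_ℝ ≠ 0 := inner_self_ne hΔ (hsr.mem j)
  rw [← Finset.add_sum_erase _ _ hjpos]
  have herase := sum_pairing ((posFin hΔ sr).erase (sr j)) (sRef (sr j))
    (sRef_simple_stable hΔ hsr j)
    (fun x _ => sRef_invol hj2 x)
    (fun γ => coPair (sr j) γ • γ)
    (fun γ => (coPair (sr j) γ * coPair γ (sr j)) • sr j)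
    (fun γ hγ => by
      have hγΔ : γ ∈ Δ := (mem_posFin.mp (Finset.mem_of_mem_erase hγ)).1
      rw [coPair_sRef_simple hΔ hsr j hγΔ]
      unfold sRef
      rw [neg_smul, smul_sub, smul_smul]
      abel)
  refine ⟨2 + 2⁻¹ * ∑ γ ∈ (posFin hΔ sr).erase (sr j), (coPair (sr j) γ * coPair γ (sr j)), ?_⟩
  rw [herase, coPair_self' hj2]
  rw [show (∑ γ ∈ (posFin hΔ sr).erase (sr j), (coPair (sr j) γ * coPair γ (sr j)) • sr j)
      = (∑ γ ∈ (posFin hΔ sr).erase (sr j), (coPair (sr j) γ * coPair γ (sr j))) • sr j from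
    Finset.sum_smul.symm]
  rw [smul_smul, add_smul]

end MinAux

namespace MinAux

variable {Δ : Set E} {l : ℕ} {sr : Fin l → E}

local instance : DecidableEq E := Classical.decEq E

/-- difference of coordinate representations -/
lemma sub_rep {x y : E} {c d : Fin l → ℝ} (hx : x = ∑ i, c i • sr i)
    (hy : y = ∑ i, d i • sr i) : x - y = ∑ i, (c i - d i) • sr i := by
  rw [hx, hy, ← Finset.sum_sub_distrib]
  congr 1; funext i; rw [sub_smul]

lemma add_rep {x y : E} {c d : Fin l → ℝ} (hx : x = ∑ i, c i • sr i)
    (hy : y = ∑ i, d i • sr i) : x + y = ∑ i, (c i + d i) • sr i := by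
  rw [hx, hy, ← Finset.sum_add_distrib]
  congr 1; funext i; rw [add_smul]

/-- for a positive root `γ ≠ ψ`, the pairing with the highest root is `0` or `1` -/
lemma coPair_psi (hΔ : IsRootSystem Δ) (hsr : IsBase Δ sr) {ψ : E}
    (hψ : IsHighestRoot Δ sr ψ) {γ : E} (hγ : IsPositiveRoot Δ sr γ) (hne : γ ≠ ψ) :
    coPair γ ψ = 0 ∨ coPair γ ψ = 1 := by
  have hψΔ : ψ ∈ Δ := hψ.1.1
  have hγΔ : γ ∈ Δ := hγ.1
  have hψ2 : (0:ℝ) < ⟪ψ, ψ⟫_ℝ := inner_self_pos_of_mem hΔ hψΔ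
  obtain ⟨z, hz⟩ := hΔ.integral ψ hψΔ γ hγΔ
  obtain ⟨c, hc⟩ := hγ.2
  obtain ⟨p, hp⟩ := hψ.1.2
  obtain ⟨m, hm⟩ := hψ.2 γ hγ
  have hmc : ∀ i, (p i : ℝ) - (c i : ℝ) = (m i : ℝ) := by
    have h1 : ψ - γ = ∑ i, ((p i : ℝ) - (c i : ℝ)) • sr i := sub_rep hp hc
    exact coords_eq hsr (by rw [← h1, hm])
  by_cases hz0 : z = 0
  · left; rw [hz, hz0]; norm_num
  by_cases hz1 : z = 1
  · right; rw [hz, hz1]; norm_num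
  exfalso
  rcases lt_or_gt_of_ne (fun h : z = 0 => hz0 h) with hzneg | hzpos
  · -- z ≤ -1 : then ⟪γ, ψ⟫ < 0 and γ + ψ would be a root above ψ
    have hip : ⟪γ, ψ⟫_ℝ < 0 := by
      have : coPair γ ψ < 0 := by
        rw [hz]; exact_mod_cast hzneg
      unfold coPair at this
      by_contra h
      push_neg at h
      have : 0 ≤ 2 * ⟪γ, ψ⟫_ℝ / ⟪ψ, ψ⟫_ℝ := div_nonneg (by linarith) (le_of_lt hψ2)
      linarith
    have hne' : γ ≠ -ψ := by
      intro h
      have h1 : γ = ∑ i, (-(p i : ℝ)) • sr i := by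
        rw [h, hp, ← Finset.sum_neg_distrib]
        congr 1; funext i; rw [neg_smul]
      have h2 := coords_eq hsr (by rw [← hc, h1] :
        (∑ i, (c i : ℝ) • sr i) = ∑ i, (-(p i : ℝ)) • sr i)
      have h3 : γ = 0 := by
        rw [hc]
        apply Finset.sum_eq_zero
        intro i _
        have := h2 i
        have hcn : (0:ℝ) ≤ (c i : ℝ) := Nat.cast_nonneg _
        have hpn : (0:ℝ) ≤ (p i : ℝ) := Nat.cast_nonneg _
        have : (c i : ℝ) = 0 := by linarith
        rw [this, zero_smul]
      exact hΔ.not_zero (h3 ▸ hγΔ)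
    have hsum : γ + ψ ∈ Δ := add_mem_of_inner_neg hΔ hγΔ hψΔ hip hne'
    have hsumpos : IsPositiveRoot Δ sr (γ + ψ) :=
      isPos_of_nonneg hΔ hsr hsum
        (fun i => add_nonneg (Nat.cast_nonneg _) (Nat.cast_nonneg _))
        (add_rep hc hp)
    obtain ⟨e, he⟩ := hψ.2 (γ + ψ) hsumpos
    have h4 : ψ - (γ + ψ) = -γ := by abel
    have h5 : γ = ∑ i, (-(e i : ℝ)) • sr i := by
      have : -γ = ∑ i, (e i : ℝ) • sr i := by rw [← h4, he]
      rw [show γ = -(-γ) by abel, this, ← Finset.sum_neg_distrib]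
      congr 1; funext i; rw [neg_smul]
    have h6 := coords_eq hsr (by rw [← hc, h5] :
      (∑ i, (c i : ℝ) • sr i) = ∑ i, (-(e i : ℝ)) • sr i)
    have h7 : γ = 0 := by
      rw [hc]
      apply Finset.sum_eq_zero
      intro i _
      have := h6 i
      have hcn : (0:ℝ) ≤ (c i : ℝ) := Nat.cast_nonneg _
      have hen : (0:ℝ) ≤ (e i : ℝ) := Nat.cast_nonneg _
      have : (c i : ℝ) = 0 := by linarith
      rw [this, zero_smul]
    exact hΔ.not_zero (h7 ▸ hγΔ)
  · -- z ≥ 2 : reflect γ in ψ and contradict the highest root property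
    have hz2 : (2:ℤ) ≤ z := by omega
    have hz2' : (2:ℝ) ≤ (z:ℝ) := by exact_mod_cast hz2
    have hζΔ : (z:ℝ) • ψ - γ ∈ Δ := by
      have h1 : sRef ψ γ ∈ Δ := sRef_mem hΔ hψΔ hγΔ
      have h2 := neg_mem hΔ h1
      have h3 : -(sRef ψ γ) = (z:ℝ) • ψ - γ := by
        unfold sRef
        rw [hz]
        abel
      rwa [h3] at h2
    have hζrep : (z:ℝ) • ψ - γ = ∑ i, ((z:ℝ) * (p i : ℝ) - (c i : ℝ)) • sr i := by
      have h1 : (z:ℝ) • ψ = ∑ i, ((z:ℝ) * (p i : ℝ)) • sr i := by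
        rw [hp, Finset.smul_sum]
        congr 1; funext i; rw [smul_smul]
      exact sub_rep h1 hc
    have hζpos : IsPositiveRoot Δ sr ((z:ℝ) • ψ - γ) := by
      apply isPos_of_nonneg hΔ hsr hζΔ _ hζrep
      intro i
      have h1 : (z:ℝ) * (p i : ℝ) - (c i : ℝ)
          = ((z:ℝ) - 1) * (p i : ℝ) + ((p i : ℝ) - (c i : ℝ)) := by ring
      rw [h1, hmc i]
      have : (0:ℝ) ≤ ((z:ℝ) - 1) * (p i : ℝ) :=
        mul_nonneg (by linarith) (Nat.cast_nonneg _)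
      have : (0:ℝ) ≤ (m i : ℝ) := Nat.cast_nonneg _
      linarith
    obtain ⟨n, hn⟩ := hψ.2 _ hζpos
    have hnrep : ψ - ((z:ℝ) • ψ - γ) = ∑ i, ((c i : ℝ) - ((z:ℝ) - 1) * (p i : ℝ)) • sr i := by
      have h1 : ψ - ((z:ℝ) • ψ - γ) = γ - (((z:ℝ) - 1) • ψ) := by
        rw [sub_smul, one_smul]; abel
      rw [h1]
      have h2 : ((z:ℝ) - 1) • ψ = ∑ i, (((z:ℝ) - 1) * (p i : ℝ)) • sr i := by
        rw [hp, Finset.smul_sum]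
        congr 1; funext i; rw [smul_smul]
      exact sub_rep hc h2
    have hco := coords_eq hsr (by rw [← hnrep, hn] :
      (∑ i, ((c i : ℝ) - ((z:ℝ) - 1) * (p i : ℝ)) • sr i) = ∑ i, (n i : ℝ) • sr i)
    -- each m i = 0, hence γ = ψ
    have hm0 : ∀ i, (m i : ℝ) = 0 := by
      intro i
      have h1 := hco i
      have h2 := hmc i
      have hpn : (0:ℝ) ≤ (p i : ℝ) := Nat.cast_nonneg _
      have hmn : (0:ℝ) ≤ (m i : ℝ) := Nat.cast_nonneg _
      have hnn : (0:ℝ) ≤ (n i : ℝ) := Nat.cast_nonneg _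
      nlinarith
    apply hne
    have : ψ - γ = 0 := by
      rw [hm]
      apply Finset.sum_eq_zero
      intro i _
      rw [hm0 i, zero_smul]
    have := sub_eq_zero.mp this
    exact this.symm

end MinAux

namespace MinAux

variable {Δ : Set E} {l : ℕ} {sr : Fin l → E}

local instance : DecidableEq E := Classical.decEq E

lemma eigen_psi (hΔ : IsRootSystem Δ) (hsr : IsBase Δ sr) {ψ : E}
    (hψ : IsHighestRoot Δ sr ψ) :
    ∑ γ ∈ posFin hΔ sr, coPair ψ γ • γ
      = (2⁻¹ * (∑ γ ∈ posFin hΔ sr, coPair ψ γ) + 1) • ψ := by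
  have hψΔ : ψ ∈ Δ := hψ.1.1
  have hψmem : ψ ∈ posFin hΔ sr := mem_posFin.mpr hψ.1
  have hψ2 : (0:ℝ) < ⟪ψ, ψ⟫_ℝ := inner_self_pos_of_mem hΔ hψΔ
  have hψ2' : ⟪ψ, ψ⟫_ℝ ≠ 0 := ne_of_gt hψ2
  have hsplitT : coPair ψ ψ + ∑ γ ∈ (posFin hΔ sr).erase ψ, coPair ψ γ
      = ∑ γ ∈ posFin hΔ sr, coPair ψ γ :=
    Finset.add_sum_erase (posFin hΔ sr) (fun γ => coPair ψ γ) hψmem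
  have hAT : ∑ γ ∈ (posFin hΔ sr).erase ψ, coPair ψ γ
      = (∑ γ ∈ posFin hΔ sr, coPair ψ γ) - 2 := by
    rw [coPair_self' hψ2'] at hsplitT; linarith
  have hsplitV : coPair ψ ψ • ψ + ∑ γ ∈ (posFin hΔ sr).erase ψ, coPair ψ γ • γ
      = ∑ γ ∈ posFin hΔ sr, coPair ψ γ • γ :=
    Finset.add_sum_erase (posFin hΔ sr) (fun γ => coPair ψ γ • γ) hψmem
  set K := ((posFin hΔ sr).erase ψ).filter (fun γ => ⟪ψ, γ⟫_ℝ ≠ 0) with hK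
  have hcoP0 : ∀ γ, ⟪ψ, γ⟫_ℝ = 0 → coPair ψ γ = 0 := by
    intro γ h
    unfold coPair
    rw [h]; simp
  have hKV : ∑ γ ∈ K, coPair ψ γ • γ = ∑ γ ∈ (posFin hΔ sr).erase ψ, coPair ψ γ • γ := by
    rw [hK]
    apply Finset.sum_filter_of_ne
    intro γ _ hne h0
    exact hne (by rw [hcoP0 γ h0, zero_smul])
  have hKS : ∑ γ ∈ K, coPair ψ γ = ∑ γ ∈ (posFin hΔ sr).erase ψ, coPair ψ γ := by
    rw [hK]
    apply Finset.sum_filter_of_ne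
    intro γ _ hne h0
    exact hne (hcoP0 γ h0)
  -- facts about elements of K
  have hKfacts : ∀ γ ∈ K, IsPositiveRoot Δ sr γ ∧ γ ≠ ψ ∧ 2 * ⟪ψ, γ⟫_ℝ = ⟪ψ, ψ⟫_ℝ := by
    intro γ hγ
    have h1 := Finset.mem_filter.mp hγ
    have h2 : γ ∈ posFin hΔ sr := Finset.mem_of_mem_erase h1.1
    have h3 : γ ≠ ψ := Finset.ne_of_mem_erase h1.1
    have hpos := mem_posFin.mp h2
    have hip : ⟪ψ, γ⟫_ℝ ≠ 0 := h1.2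
    refine ⟨hpos, h3, ?_⟩
    have hcomm : ⟪γ, ψ⟫_ℝ = ⟪ψ, γ⟫_ℝ := real_inner_comm ψ γ
    rcases coPair_psi hΔ hsr hψ hpos h3 with h | h
    · exfalso
      apply hip
      unfold coPair at h
      have := (div_eq_iff hψ2').mp h
      linarith
    · unfold coPair at h
      have := (div_eq_iff hψ2').mp h
      linarith
  -- the involution γ ↦ ψ - γ on K
  have hg_mem : ∀ γ ∈ K, ψ - γ ∈ K := by
    intro γ hγ
    obtain ⟨hpos, h3, hhalf⟩ := hKfacts γ hγ
    have hγΔ := hpos.1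
    have hδΔ : ψ - γ ∈ Δ := by
      have h4 : coPair γ ψ = 1 := by
        unfold coPair
        rw [real_inner_comm ψ γ, hhalf]
        field_simp
      have h5 := sRef_mem hΔ hψΔ hγΔ
      have h6 := neg_mem hΔ h5
      have h7 : -(sRef ψ γ) = ψ - γ := by
        unfold sRef
        rw [h4, one_smul]
        abel
      rwa [h7] at h6
    obtain ⟨m, hm⟩ := hψ.2 γ hpos
    have hδpos : IsPositiveRoot Δ sr (ψ - γ) :=
      isPos_of_nonneg hΔ hsr hδΔ (fun i => Nat.cast_nonneg _) hm
    have hδne : ψ - γ ≠ ψ := by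
      intro h
      have hγ0 : γ = 0 := sub_eq_self.mp h
      exact hΔ.not_zero (hγ0 ▸ hγΔ)
    have hδip : ⟪ψ, ψ - γ⟫_ℝ ≠ 0 := by
      rw [inner_sub_right]
      intro h
      exact hψ2' (by linarith)
    exact Finset.mem_filter.mpr ⟨Finset.mem_erase.mpr ⟨hδne, mem_posFin.mpr hδpos⟩, hδip⟩
  have hg_inv : ∀ γ ∈ K, ψ - (ψ - γ) = γ := fun γ _ => by abel
  have hfw : ∀ γ ∈ K, coPair ψ γ • γ + coPair ψ (ψ - γ) • (ψ - γ) = coPair ψ γ • ψ := by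
    intro γ hγ
    obtain ⟨hpos, h3, hhalf⟩ := hKfacts γ hγ
    have hcomm : ⟪γ, ψ⟫_ℝ = ⟪ψ, γ⟫_ℝ := real_inner_comm ψ γ
    have hδ2 : ⟪ψ - γ, ψ - γ⟫_ℝ = ⟪γ, γ⟫_ℝ := by
      rw [inner_sub_left, inner_sub_right, inner_sub_right]
      linarith
    have hδip : ⟪ψ, ψ - γ⟫_ℝ = ⟪ψ, γ⟫_ℝ := by
      rw [inner_sub_right]
      linarith
    have hcoeq : coPair ψ (ψ - γ) = coPair ψ γ := by
      unfold coPair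
      rw [hδ2, hδip]
    rw [hcoeq, ← smul_add]
    congr 1
    abel
  have hKpair := sum_pairing K (fun γ => ψ - γ) hg_mem hg_inv
    (fun γ => coPair ψ γ • γ) (fun γ => coPair ψ γ • ψ) hfw
  have hKw : ∑ γ ∈ K, coPair ψ γ • ψ = (∑ γ ∈ K, coPair ψ γ) • ψ := Finset.sum_smul.symm
  rw [hKw, hKS, hAT] at hKpair
  rw [← hsplitV, ← hKV, hKpair, coPair_self' hψ2', smul_smul, ← add_smul]
  congr 1
  ring

end MinAux

namespace MinAux

variable {Δ : Set E} {l : ℕ} {sr : Fin l → E}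

lemma coPair_lam_one (hΔ : IsRootSystem Δ) (hsr : IsBase Δ sr) {lam : E}
    (hlam : IsMinuscule Δ sr lam) {γ : E} (hγ : IsPositiveRoot Δ sr γ)
    (hne : coPair lam γ ≠ 0) : coPair lam γ = 1 := by
  obtain ⟨z, hz⟩ := hlam.1.1 γ hγ.1
  have hγ2 := inner_self_pos_of_mem hΔ hγ.1
  have hip : 0 ≤ ⟪lam, γ⟫_ℝ := by
    obtain ⟨c, hc⟩ := hγ.2
    have h1 : ⟪lam, γ⟫_ℝ = ∑ i, (c i : ℝ) * ⟪lam, sr i⟫_ℝ := by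
      calc ⟪lam, γ⟫_ℝ = ⟪γ, lam⟫_ℝ := real_inner_comm γ lam
        _ = ∑ i, ⟪(c i : ℝ) • sr i, lam⟫_ℝ := by rw [hc, sum_inner]
        _ = ∑ i, (c i : ℝ) * ⟪lam, sr i⟫_ℝ := by
            apply Finset.sum_congr rfl
            intro i _
            rw [real_inner_smul_left, real_inner_comm lam (sr i)]
    rw [h1]
    apply Finset.sum_nonneg
    intro i _
    apply mul_nonneg (Nat.cast_nonneg _)
    have h2 := hlam.1.2 i
    have h3 := inner_self_pos_of_mem hΔ (hsr.mem i)
    have h4 : coPair lam (sr i) * ⟪sr i, sr i⟫_ℝ = 2 * ⟪lam, sr i⟫_ℝ := by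
      unfold coPair; field_simp
    nlinarith [mul_nonneg h2 (le_of_lt h3)]
  have hnn : 0 ≤ coPair lam γ := by
    unfold coPair
    exact div_nonneg (by linarith) (le_of_lt hγ2)
  have hle := hlam.2 γ hγ
  have h0 : (0:ℤ) ≤ z := by exact_mod_cast hz ▸ hnn
  have h1 : z ≤ 1 := by exact_mod_cast hz ▸ hle
  have h2 : z ≠ 0 := by
    intro h
    exact hne (by rw [hz, h]; norm_num)
  have h3 : z = 1 := by omega
  rw [hz, h3]; norm_num

end MinAux

/-- For a minuscule fundamental weight `lam`, the coefficient
`n_a = (∑_{γ ∈ Δ⁺ \ Δ_P⁺} γ, a^∨)` equals the Coxeter number, for every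
`a ∈ Δ⁺ \ Δ_P⁺`.  Here `Δ_P⁺` consists of the positive roots `γ` with
`(lam, γ^∨) = 0`. -/
theorem sum_pos_roots_pairing_eq_coxeter
    {E : Type*} [NormedAddCommGroup E] [InnerProductSpace ℝ E]
    (Δ : Set E) {l : ℕ} (sr : Fin l → E)
    (hΔ : IsRootSystem Δ) (hsr : IsBase Δ sr)
    (lam : E) (hlam : IsMinuscule Δ sr lam)
    (i₀ : Fin l) (hfund : ∀ j, coPair lam (sr j) = if j = i₀ then 1 else 0)
    (ψ : E) (hψ : IsHighestRoot Δ sr ψ)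
    (q : Fin l → ℕ) (hq : ψ = ∑ j, (q j : ℝ) • sr j)
    (cox : ℕ) (hcox : cox = 1 + ∑ j, q j)
    (S : Finset E) (hS : ∀ γ, γ ∈ S ↔ (IsPositiveRoot Δ sr γ ∧ coPair lam γ ≠ 0))
    (a : E) (ha : IsPositiveRoot Δ sr a) (haP : coPair lam a ≠ 0) :
    coPair (∑ γ ∈ S, γ) a = cox := by
  classical
  -- every coefficient of the highest root is at least 1
  have hq1 : ∀ j, (1:ℝ) ≤ (q j : ℝ) := by
    intro j
    obtain ⟨c, hcψ⟩ := hψ.2 (sr j) (MinAux.simple_isPos hsr j)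
    have hsrj : sr j = ∑ i, (if i = j then (1:ℝ) else 0) • sr i := by
      simp [ite_smul, Finset.sum_ite_eq']
    have hrep : ψ - sr j = ∑ i, ((q i : ℝ) - (if i = j then 1 else 0)) • sr i :=
      MinAux.sub_rep hq hsrj
    have hco := MinAux.coords_eq hsr (by rw [← hrep, hcψ] :
      (∑ i, ((q i : ℝ) - (if i = j then 1 else 0)) • sr i) = ∑ i, (c i : ℝ) • sr i) j
    simp at hco
    have hnn := Nat.cast_nonneg (α := ℝ) (c j)
    linarith
  -- the simple roots span E
  have hspan : Submodule.span ℝ (Set.range sr) = ⊤ := by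
    rw [← top_le_iff, ← hΔ.span_top]
    apply Submodule.span_le.mpr
    intro x hx
    rcases hsr.decomp x hx with ⟨c, hc⟩ | ⟨c, hc⟩
    · rw [hc]
      exact Submodule.sum_mem _
        (fun i _ => Submodule.smul_mem _ _ (Submodule.subset_span ⟨i, rfl⟩))
    · rw [hc]
      exact Submodule.neg_mem _ (Submodule.sum_mem _
        (fun i _ => Submodule.smul_mem _ _ (Submodule.subset_span ⟨i, rfl⟩)))
  have hlmem : lam ∈ Submodule.span ℝ (Set.range sr) := by
    rw [hspan]; exact Submodule.mem_top
  obtain ⟨cl, hcl⟩ := (Submodule.mem_span_range_iff_exists_fun ℝ).mp hlmem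
  -- notation for the positive root finset
  set P := MinAux.posFin hΔ sr with hP
  -- total pairing of ψ against all positive coroots
  have hlin : ∀ x : E, ∀ d : Fin l → ℝ, x = ∑ j, d j • sr j →
      ∀ γ : E, coPair x γ = ∑ j, d j * coPair (sr j) γ := by
    intro x d hx γ
    rw [hx, MinAux.coPair_sum_left]
    apply Finset.sum_congr rfl
    intro j _
    rw [MinAux.coPair_smul_left]
  have hTψ : ∑ γ ∈ P, coPair ψ γ = 2 * ∑ j, (q j : ℝ) := by
    have h1 : ∑ γ ∈ P, coPair ψ γ
        = ∑ γ ∈ P, ∑ j, (q j : ℝ) * coPair (sr j) γ :=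
      Finset.sum_congr rfl (fun γ _ => hlin ψ (fun j => (q j : ℝ)) hq γ)
    rw [h1, Finset.sum_comm]
    have h2 : ∀ j : Fin l, ∑ γ ∈ P, (q j : ℝ) * coPair (sr j) γ = (q j : ℝ) * 2 := by
      intro j
      rw [← Finset.mul_sum, hP, MinAux.sum_coPair_simple hΔ hsr j]
    rw [Finset.sum_congr rfl (fun j _ => h2 j), ← Finset.sum_mul]
    ring
  -- the eigenvector relations
  choose r hr using fun j => MinAux.eigen_simple hΔ hsr j
  -- compute M ψ in two ways
  have hMψ1 : ∑ γ ∈ P, coPair ψ γ • γ = ∑ j, ((q j : ℝ) * r j) • sr j := by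
    have h1 : ∑ γ ∈ P, coPair ψ γ • γ
        = ∑ γ ∈ P, ∑ j, ((q j : ℝ) * coPair (sr j) γ) • γ := by
      apply Finset.sum_congr rfl
      intro γ _
      rw [hlin ψ (fun j => (q j : ℝ)) hq γ, Finset.sum_smul]
    rw [h1, Finset.sum_comm]
    apply Finset.sum_congr rfl
    intro j _
    have h2 : ∑ γ ∈ P, ((q j : ℝ) * coPair (sr j) γ) • γ
        = (q j : ℝ) • ∑ γ ∈ P, coPair (sr j) γ • γ := by
      rw [Finset.smul_sum]
      apply Finset.sum_congr rfl
      intro γ _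
      rw [smul_smul]
    rw [h2, hP, hr j, smul_smul]
  have hMψ2 : ∑ γ ∈ P, coPair ψ γ • γ = ((∑ j, (q j : ℝ)) + 1) • ψ := by
    rw [hP, MinAux.eigen_psi hΔ hsr hψ, ← hP, hTψ]
    congr 1
    ring
  have hcoords : ∀ j, (q j : ℝ) * r j = ((∑ j', (q j' : ℝ)) + 1) * (q j : ℝ) := by
    have h2 : ((∑ j', (q j' : ℝ)) + 1) • ψ
        = ∑ j, (((∑ j', (q j' : ℝ)) + 1) * (q j : ℝ)) • sr j := by
      rw [hq, Finset.smul_sum]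
      apply Finset.sum_congr rfl
      intro j _
      rw [smul_smul]
    exact MinAux.coords_eq hsr (by rw [← hMψ1, hMψ2, h2])
  have hrval : ∀ j, r j = (∑ j', (q j' : ℝ)) + 1 := by
    intro j
    have h1 := hcoords j
    have hqj : (q j : ℝ) ≠ 0 := by have := hq1 j; linarith
    apply mul_left_cancel₀ hqj
    rw [h1]; ring
  -- compute M lam
  have hMlam : ∑ γ ∈ P, coPair lam γ • γ = ((∑ j', (q j' : ℝ)) + 1) • lam := by
    have h1 : ∑ γ ∈ P, coPair lam γ • γ
        = ∑ γ ∈ P, ∑ j, (cl j * coPair (sr j) γ) • γ := by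
      apply Finset.sum_congr rfl
      intro γ _
      rw [hlin lam cl hcl.symm γ, Finset.sum_smul]
    rw [h1, Finset.sum_comm]
    have h2 : ∀ j : Fin l, ∑ γ ∈ P, (cl j * coPair (sr j) γ) • γ
        = (((∑ j', (q j' : ℝ)) + 1) * cl j) • sr j := by
      intro j
      have h3 : ∑ γ ∈ P, (cl j * coPair (sr j) γ) • γ
          = cl j • ∑ γ ∈ P, coPair (sr j) γ • γ := by
        rw [Finset.smul_sum]
        apply Finset.sum_congr rfl
        intro γ _
        rw [smul_smul]
      rw [h3, hP, hr j, hrval j, smul_smul]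
      congr 1
      ring
    rw [Finset.sum_congr rfl (fun j _ => h2 j)]
    have h4 : ∑ j, (((∑ j', (q j' : ℝ)) + 1) * cl j) • sr j
        = ((∑ j', (q j' : ℝ)) + 1) • ∑ j, cl j • sr j := by
      rw [Finset.smul_sum]
      apply Finset.sum_congr rfl
      intro j _
      rw [smul_smul]
    rw [h4, hcl]
  -- M lam is the sum over S
  have hsub : S ⊆ P := fun γ hγ => MinAux.mem_posFin.mpr ((hS γ).mp hγ).1
  have hvanish : ∀ γ ∈ P, γ ∉ S → coPair lam γ • γ = 0 := by
    intro γ hγ hns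
    have hpos := MinAux.mem_posFin.mp (hP ▸ hγ)
    have h0 : coPair lam γ = 0 := by
      by_contra h
      exact hns ((hS γ).mpr ⟨hpos, h⟩)
    rw [h0, zero_smul]
  have hone : ∀ γ ∈ S, coPair lam γ • γ = γ := by
    intro γ hγ
    obtain ⟨hpos, hne0⟩ := (hS γ).mp hγ
    rw [MinAux.coPair_lam_one hΔ hsr hlam hpos hne0, one_smul]
  have hσ : ∑ γ ∈ P, coPair lam γ • γ = ∑ γ ∈ S, γ := by
    rw [← Finset.sum_subset hsub hvanish]
    exact Finset.sum_congr rfl hone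
  -- finish
  have hfinal : ∑ γ ∈ S, γ = ((∑ j', (q j' : ℝ)) + 1) • lam := by
    rw [← hσ, hMlam]
  rw [hfinal, MinAux.coPair_smul_left,
    MinAux.coPair_lam_one hΔ hsr hlam ha haP, mul_one, hcox]
  push_cast
  ring
end
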